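/- The class of finite cographs (graphs constructible from single vertices by disjoint union and join) is exactly the class of finite graphs with no induced path on four vertices (P4-free graphs). -/

import Mathlib

/-!
A P4 is connected and so is its complement, so its four vertices lie on one side of a
disjoint union (its edges cannot cross) or of a join (its non-edges cannot cross), and it is
then a P4 of that side; hence cographs are P4-free.

Conversely, by Seinsche's theorem a P4-free graph on at least two vertices is disconnected or
has disconnected complement, and recursing on the two sides of the separation builds a cograph
term. Seinsche's theorem is proved by adding a vertex `x` to a smaller graph which, up to
complementation (P4 is self-complementary), is split into `A` and its complement with no edges
between them. If `x` is adjacent to everything, the complement is disconnected. If no edge joins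
a neighbour of `x` to a non-neighbour, the non-neighbours of `x` split off. Otherwise such an edge
`w — w'` lies inside one side, and a neighbour `b` of `x` on the other side would give the
induced path `b — x — w — w'`; so that other side splits off.
-/

/-- Terms denoting dicographs: built from single points by parallel composition `⅋`,
symmetric series composition `⊗` and directed series composition `◁`. -/
inductive DTerm (V : Type) : Type
  | leaf : V → DTerm V
  | par : DTerm V → DTerm V → DTerm V
  | tens : DTerm V → DTerm V → DTerm V
  | seq : DTerm V → DTerm V → DTerm V

namespace DTerm

/-- The list of points (leaves) of a term. -/
def leaves {V : Type} : DTerm V → List V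
  | leaf v => [v]
  | par s t => leaves s ++ leaves t
  | tens s t => leaves s ++ leaves t
  | seq s t => leaves s ++ leaves t

/-- The irreflexive binary relation (dicograph) denoted by a term:
`⅋` is disjoint union, `⊗` adds all pairs in both directions between the two domains,
`◁` adds all arcs from the first domain to the second. -/
def rel {V : Type} : DTerm V → V → V → Prop
  | leaf _ => fun _ _ => False
  | par s t => fun a b => rel s a b ∨ rel t a b
  | tens s t => fun a b =>
      rel s a b ∨ rel t a b ∨ (a ∈ leaves s ∧ b ∈ leaves t) ∨ (a ∈ leaves t ∧ b ∈ leaves s)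
  | seq s t => fun a b => rel s a b ∨ rel t a b ∨ (a ∈ leaves s ∧ b ∈ leaves t)

end DTerm

/-- `R` is a dicograph with domain `E`: it is denoted by some term with pairwise
distinct leaves (i.e. it is constructible from singletons by the three compositions). -/
def IsDicograph {V : Type} (E : Set V) (R : V → V → Prop) : Prop :=
  ∃ T : DTerm V, T.leaves.Nodup ∧ (∀ v, v ∈ T.leaves ↔ v ∈ E) ∧ (∀ a b, T.rel a b ↔ R a b)

/-- A term using only parallel composition (disjoint union) and symmetric series
composition (join): a cograph term. -/
def NoSeq {V : Type} : DTerm V → Prop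
  | DTerm.leaf _ => True
  | DTerm.par s t => NoSeq s ∧ NoSeq t
  | DTerm.tens s t => NoSeq s ∧ NoSeq t
  | DTerm.seq _ _ => False

/-- `R` is a cograph on `E`: constructible from single vertices by disjoint union
and join. -/
def IsCograph {V : Type} (E : Set V) (R : V → V → Prop) : Prop :=
  ∃ T : DTerm V, NoSeq T ∧ T.leaves.Nodup ∧
    (∀ v, v ∈ T.leaves ↔ v ∈ E) ∧ (∀ a b, T.rel a b ↔ R a b)

/-- `S` is P4-free: no four vertices induce a path `a—b—c—d`. -/
def P4Free {V : Type} (S : V → V → Prop) : Prop :=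
  ¬ ∃ a b c d : V, a ≠ b ∧ a ≠ c ∧ a ≠ d ∧ b ≠ c ∧ b ≠ d ∧ c ≠ d ∧
      S a b ∧ S b c ∧ S c d ∧ ¬ S a c ∧ ¬ S a d ∧ ¬ S b d

variable {V : Type}

structure IsP4 (R : V → V → Prop) (a b c d : V) : Prop where
  ne_ab : a ≠ b
  ne_ac : a ≠ c
  ne_ad : a ≠ d
  ne_bc : b ≠ c
  ne_bd : b ≠ d
  ne_cd : c ≠ d
  adj_ab : R a b
  adj_bc : R b c
  adj_cd : R c d
  not_adj_ac : ¬ R a c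
  not_adj_ad : ¬ R a d
  not_adj_bd : ¬ R b d

theorem p4Free_iff {R : V → V → Prop} : P4Free R ↔ ∀ a b c d, ¬ IsP4 R a b c d := by
  simp only [P4Free, not_exists]
  exact forall₄_congr fun a b c d => not_congr
    ⟨fun ⟨h₁, h₂, h₃, h₄, h₅, h₆, h₇, h₈, h₉, h₁₀, h₁₁, h₁₂⟩ =>
      ⟨h₁, h₂, h₃, h₄, h₅, h₆, h₇, h₈, h₉, h₁₀, h₁₁, h₁₂⟩,
     fun ⟨h₁, h₂, h₃, h₄, h₅, h₆, h₇, h₈, h₉, h₁₀, h₁₁, h₁₂⟩ =>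
      ⟨h₁, h₂, h₃, h₄, h₅, h₆, h₇, h₈, h₉, h₁₀, h₁₁, h₁₂⟩⟩

namespace IsP4

variable {R S : V → V → Prop} {a b c d : V}

theorem of_compl (hsym : ∀ a b, R a b → R b a) (h : IsP4 Rᶜ a b c d) : IsP4 R c a d b where
  ne_ab := h.ne_ac.symm
  ne_ac := h.ne_cd
  ne_ad := h.ne_bc.symm
  ne_bc := h.ne_ad
  ne_bd := h.ne_ab
  ne_cd := h.ne_bd.symm
  adj_ab := hsym _ _ (not_not.1 h.not_adj_ac)
  adj_bc := not_not.1 h.not_adj_ad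
  adj_cd := hsym _ _ (not_not.1 h.not_adj_bd)
  not_adj_ac := h.adj_cd
  not_adj_ad := fun hcb => h.adj_bc (hsym _ _ hcb)
  not_adj_bd := h.adj_ab

theorem of_adj_closed {X : Set V} (h : IsP4 R a b c d) (ha : a ∈ X)
    (hRS : ∀ x ∈ X, ∀ y, R x y ↔ S x y) (hX : ∀ x y, S x y → y ∈ X) : IsP4 S a b c d :=
  have hab := (hRS a ha b).1 h.adj_ab
  have hb := hX a b hab
  have hbc := (hRS b hb c).1 h.adj_bc
  have hc := hX b c hbc
  { h with
    adj_ab := hab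
    adj_bc := hbc
    adj_cd := (hRS c hc d).1 h.adj_cd
    not_adj_ac := (not_congr (hRS a ha c)).1 h.not_adj_ac
    not_adj_ad := (not_congr (hRS a ha d)).1 h.not_adj_ad
    not_adj_bd := (not_congr (hRS b hb d)).1 h.not_adj_bd }

theorem of_nonadj_closed {D X : Set V} (h : IsP4 R a b c d) (hD : ∀ x y, R x y → x ∈ D ∧ y ∈ D)
    (ha : a ∈ X) (hRS : ∀ x ∈ X, ∀ y ∈ X, R x y ↔ S x y)
    (hX : ∀ x ∈ D, ∀ y ∈ D, ¬ R x y → (x ∈ X ↔ y ∈ X)) : IsP4 S a b c d :=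
  have haD := (hD a b h.adj_ab).1
  have hbD := (hD a b h.adj_ab).2
  have hcD := (hD c d h.adj_cd).1
  have hdD := (hD c d h.adj_cd).2
  have hc := (hX a haD c hcD h.not_adj_ac).1 ha
  have hd := (hX a haD d hdD h.not_adj_ad).1 ha
  have hb := (hX b hbD d hdD h.not_adj_bd).2 hd
  { h with
    adj_ab := (hRS a ha b hb).1 h.adj_ab
    adj_bc := (hRS b hb c hc).1 h.adj_bc
    adj_cd := (hRS c hc d hd).1 h.adj_cd
    not_adj_ac := (not_congr (hRS a ha c hc)).1 h.not_adj_ac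
    not_adj_ad := (not_congr (hRS a ha d hd)).1 h.not_adj_ad
    not_adj_bd := (not_congr (hRS b hb d hd)).1 h.not_adj_bd }

end IsP4

theorem P4Free.compl {R : V → V → Prop} (hsym : ∀ a b, R a b → R b a) (h : P4Free R) :
    P4Free Rᶜ :=
  p4Free_iff.2 fun _ _ _ _ hP => p4Free_iff.1 h _ _ _ _ (hP.of_compl hsym)

namespace DTerm

variable {s t : DTerm V} {a b : V}

theorem mem_leaves_of_rel {T : DTerm V} (h : T.rel a b) : a ∈ T.leaves ∧ b ∈ T.leaves := by
  induction T <;> grind [rel, leaves]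

theorem par_rel_iff_left (hst : ∀ x ∈ s.leaves, ∀ y ∈ t.leaves, x ≠ y) (ha : a ∈ s.leaves) :
    (par s t).rel a b ↔ s.rel a b :=
  or_iff_left fun h => hst a ha a (mem_leaves_of_rel h).1 rfl

theorem par_rel_iff_right (hst : ∀ x ∈ s.leaves, ∀ y ∈ t.leaves, x ≠ y) (ha : a ∈ t.leaves) :
    (par s t).rel a b ↔ t.rel a b :=
  or_iff_right fun h => hst a (mem_leaves_of_rel h).1 a ha rfl

theorem tens_rel_iff_left (hst : ∀ x ∈ s.leaves, ∀ y ∈ t.leaves, x ≠ y) (ha : a ∈ s.leaves)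
    (hb : b ∈ s.leaves) : (tens s t).rel a b ↔ s.rel a b := by
  have hat : a ∉ t.leaves := fun h => hst a ha a h rfl
  have hbt : b ∉ t.leaves := fun h => hst b hb b h rfl
  have ht : ¬ t.rel a b := fun h => hat (mem_leaves_of_rel h).1
  simp only [rel, ht, hat, hbt, and_false, false_and, or_false]

theorem tens_rel_iff_right (hst : ∀ x ∈ s.leaves, ∀ y ∈ t.leaves, x ≠ y) (ha : a ∈ t.leaves)
    (hb : b ∈ t.leaves) : (tens s t).rel a b ↔ t.rel a b := by
  have has : a ∉ s.leaves := fun h => hst a h a ha rfl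
  have hbs : b ∉ s.leaves := fun h => hst b h b hb rfl
  have hs : ¬ s.rel a b := fun h => has (mem_leaves_of_rel h).1
  simp only [rel, hs, has, hbs, and_false, false_and, or_false, false_or]

theorem mem_left_iff_of_not_tens_rel (ha : a ∈ (tens s t).leaves) (hb : b ∈ (tens s t).leaves)
    (h : ¬ (tens s t).rel a b) : a ∈ s.leaves ↔ b ∈ s.leaves := by
  simp only [leaves, rel, List.mem_append] at ha hb h
  tauto

theorem mem_right_iff_of_not_tens_rel (ha : a ∈ (tens s t).leaves) (hb : b ∈ (tens s t).leaves)
    (h : ¬ (tens s t).rel a b) : a ∈ t.leaves ↔ b ∈ t.leaves := by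
  simp only [leaves, rel, List.mem_append] at ha hb h
  tauto

end DTerm

open DTerm in
theorem NoSeq.p4Free : ∀ {T : DTerm V}, NoSeq T → T.leaves.Nodup → P4Free T.rel
  | .leaf _, _, _ => p4Free_iff.2 fun _ _ _ _ h => h.adj_ab
  | .par s t, ⟨hs, ht⟩, hnd => by
    obtain ⟨hsnd, htnd, hst⟩ := List.nodup_append.1 hnd
    refine p4Free_iff.2 fun a b c d h => ?_
    rcases List.mem_append.1 (mem_leaves_of_rel h.adj_ab).1 with ha | ha
    · exact p4Free_iff.1 (hs.p4Free hsnd) a b c d <| h.of_adj_closed ha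
        (fun _ hx _ => par_rel_iff_left hst hx) fun _ _ hxy => (mem_leaves_of_rel hxy).2
    · exact p4Free_iff.1 (ht.p4Free htnd) a b c d <| h.of_adj_closed ha
        (fun _ hx _ => par_rel_iff_right hst hx) fun _ _ hxy => (mem_leaves_of_rel hxy).2
  | .tens s t, ⟨hs, ht⟩, hnd => by
    obtain ⟨hsnd, htnd, hst⟩ := List.nodup_append.1 hnd
    refine p4Free_iff.2 fun a b c d h => ?_
    rcases List.mem_append.1 (mem_leaves_of_rel h.adj_ab).1 with ha | ha
    · exact p4Free_iff.1 (hs.p4Free hsnd) a b c d <| h.of_nonadj_closed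
        (fun _ _ => mem_leaves_of_rel) ha (fun _ hx _ hy => tens_rel_iff_left hst hx hy)
        fun _ hx _ hy => mem_left_iff_of_not_tens_rel hx hy
    · exact p4Free_iff.1 (ht.p4Free htnd) a b c d <| h.of_nonadj_closed
        (fun _ _ => mem_leaves_of_rel) ha (fun _ hx _ hy => tens_rel_iff_right hst hx hy)
        fun _ hx _ hy => mem_right_iff_of_not_tens_rel hx hy

theorem IsCograph.p4Free {E : Set V} {R : V → V → Prop} (h : IsCograph E R) : P4Free R := by
  obtain ⟨T, hT, hnd, -, hrel⟩ := h
  obtain rfl : T.rel = R := funext₂ fun a b => propext (hrel a b)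
  exact hT.p4Free hnd

structure Separates (R : V → V → Prop) (E A : Set V) : Prop where
  subset : A ⊆ E
  nonempty : A.Nonempty
  diff_nonempty : (E \ A).Nonempty
  not_adj : ∀ a ∈ A, ∀ b ∈ E \ A, ¬ R a b

namespace Separates

variable {R : V → V → Prop} {E A : Set V} {x : V}

theorem diff (hsym : ∀ a b, R a b → R b a) (h : Separates R E A) : Separates R E (E \ A) where
  subset := Set.sdiff_subset
  nonempty := h.diff_nonempty
  diff_nonempty := by rw [Set.sdiff_sdiff_cancel_left h.subset]; exact h.nonempty
  not_adj a ha b hb hab := by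
    rw [Set.sdiff_sdiff_cancel_left h.subset] at hb
    exact h.not_adj b hb a ha (hsym a b hab)

theorem insert_of_not_adj (hx : x ∉ E) (h : Separates R E A) (hxA : ∀ a ∈ A, ¬ R a x) :
    Separates R (insert x E) A where
  subset := h.subset.trans (Set.subset_insert x E)
  nonempty := h.nonempty
  diff_nonempty := ⟨x, Set.mem_insert x E, fun hx' => hx (h.subset hx')⟩
  not_adj a ha b hb := by
    rcases hb with ⟨rfl | hbE, hbA⟩
    · exact hxA a ha
    · exact h.not_adj a ha b ⟨hbE, hbA⟩

end Separates

section Seinsche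

variable {R : V → V → Prop} {E : Set V} {x : V}

theorem separates_insert_singleton (hx : x ∉ E) (hE : E.Nonempty) (h : ∀ y ∈ E, ¬ R x y) :
    Separates R (insert x E) {x} where
  subset := Set.singleton_subset_iff.2 (Set.mem_insert x E)
  nonempty := Set.singleton_nonempty x
  diff_nonempty := by
    obtain ⟨y, hy⟩ := hE
    exact ⟨y, Set.mem_insert_of_mem x hy, fun hyx => hx (hyx ▸ hy)⟩
  not_adj a ha b hb := by
    rw [Set.mem_singleton_iff.1 ha]
    rw [Set.insert_sdiff_self_of_notMem hx] at hb
    exact h b hb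

theorem separates_insert_nonadj (hsym : ∀ a b, R a b → R b a) (hx : x ∉ E) {y : V} (hy : y ∈ E)
    (hxy : ¬ R x y) (hclosed : ∀ w ∈ E, ∀ w' ∈ E, R x w → ¬ R x w' → ¬ R w w') :
    Separates R (insert x E) {z ∈ E | ¬ R x z} where
  subset _ hz := Set.mem_insert_of_mem x hz.1
  nonempty := ⟨y, hy, hxy⟩
  diff_nonempty := ⟨x, Set.mem_insert x E, fun hx' => hx hx'.1⟩
  not_adj a ha b hb hab := by
    rcases hb with ⟨rfl | hbE, hbN⟩
    · exact ha.2 (hsym a _ hab)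
    · exact hclosed b hbE a ha.1 (not_not.1 fun h => hbN ⟨hbE, h⟩) ha.2 (hsym a b hab)

theorem Separates.insert_or (hsym : ∀ a b, R a b → R b a) (hP : P4Free R) (hx : x ∉ E)
    {A : Set V} (hA : Separates R E A) :
    (∃ B, Separates R (insert x E) B) ∨ ∃ B, Separates Rᶜ (insert x E) B := by
  by_cases hall : ∀ y ∈ E, R x y
  · exact .inr ⟨{x}, separates_insert_singleton hx (hA.nonempty.mono hA.subset)
      fun y hy => not_not.2 (hall y hy)⟩
  push Not at hall
  obtain ⟨y, hy, hxy⟩ := hall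
  refine .inl ?_
  by_cases hedge : ∃ w ∈ E, ∃ w' ∈ E, R x w ∧ ¬ R x w' ∧ R w w'
  swap
  · push Not at hedge
    exact ⟨_, separates_insert_nonadj hsym hx hy hxy hedge⟩
  obtain ⟨w, hw, w', hw', hxw, hxw', hww'⟩ := hedge
  wlog hwA : w ∈ A generalizing A
  · exact this (hA.diff hsym) ⟨hw, hwA⟩
  have hw'A : w' ∈ A := by_contra fun h => hA.not_adj w hwA w' ⟨hw', h⟩ hww'
  -- a neighbour `b` of `x` outside `A` would give the induced path `b — x — w — w'`
  refine ⟨E \ A, (hA.diff hsym).insert_of_not_adj hx fun b hb hbx => p4Free_iff.1 hP b x w w' ?_⟩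
  have hbw : ∀ v ∈ A, ¬ R b v := fun v hv hbv => hA.not_adj v hv b hb (hsym b v hbv)
  exact
    { ne_ab := ne_of_mem_of_not_mem hb.1 hx
      ne_ac := fun h => hb.2 (h ▸ hwA)
      ne_ad := fun h => hb.2 (h ▸ hw'A)
      ne_bc := (ne_of_mem_of_not_mem hw hx).symm
      ne_bd := (ne_of_mem_of_not_mem hw' hx).symm
      ne_cd := fun h => hxw' (h ▸ hxw)
      adj_ab := hbx
      adj_bc := hxw
      adj_cd := hww'
      not_adj_ac := hbw w hwA
      not_adj_ad := hbw w' hw'A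
      not_adj_bd := hxw' }

/-- **Seinsche's theorem.** -/
theorem P4Free.exists_separates (hsym : ∀ a b, R a b → R b a) (hP : P4Free R) (hE : E.Finite)
    (hE₂ : E.Nontrivial) : (∃ A, Separates R E A) ∨ ∃ A, Separates Rᶜ E A := by
  induction E, hE using Set.Finite.induction_on with
  | empty => exact absurd hE₂ Set.not_nontrivial_empty
  | @insert x E hx _ ih =>
    rcases E.subsingleton_or_nontrivial with hsub | hnt
    · obtain ⟨y, hy⟩ : E.Nonempty := by
        by_contra hE
        rw [Set.not_nonempty_iff_eq_empty.1 hE, insert_empty_eq] at hE₂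
        exact Set.not_nontrivial_singleton hE₂
      have hEy : ∀ z ∈ E, z = y := fun z hz => hsub hz hy
      by_cases hxy : R x y
      · exact .inr ⟨{x}, separates_insert_singleton hx ⟨y, hy⟩
          fun z hz => not_not.2 (hEy z hz ▸ hxy)⟩
      · exact .inl ⟨{x}, separates_insert_singleton hx ⟨y, hy⟩ fun z hz => hEy z hz ▸ hxy⟩
    · rcases ih hnt with ⟨A, hA⟩ | ⟨A, hA⟩
      · exact hA.insert_or hsym hP hx
      · have hsymc : ∀ a b, Rᶜ a b → Rᶜ b a := fun a b h h' => h (hsym b a h')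
        have := hA.insert_or hsymc (hP.compl hsym) hx
        rw [compl_compl] at this
        exact this.symm

end Seinsche

def inducedRel (R : V → V → Prop) (E : Set V) (a b : V) : Prop := a ∈ E ∧ b ∈ E ∧ R a b

namespace IsCograph

variable {R S : V → V → Prop} {A B : Set V}

theorem congr (h : IsCograph A R) (hRS : ∀ a b, R a b ↔ S a b) : IsCograph A S :=
  let ⟨T, hT, hnd, hmem, hrel⟩ := h
  ⟨T, hT, hnd, hmem, fun a b => (hrel a b).trans (hRS a b)⟩

theorem singleton (u : V) : IsCograph {u} fun _ _ => False :=
  ⟨.leaf u, trivial, List.nodup_singleton u, by simp [DTerm.leaves], fun _ _ => Iff.rfl⟩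

theorem union (hR : IsCograph A R) (hS : IsCograph B S) (hAB : Disjoint A B) :
    IsCograph (A ∪ B) fun a b => R a b ∨ S a b := by
  obtain ⟨s, hs, hsnd, hsA, hsR⟩ := hR
  obtain ⟨t, ht, htnd, htB, htS⟩ := hS
  refine ⟨.par s t, ⟨hs, ht⟩, ?_, fun v => ?_, fun a b => ?_⟩
  · exact List.nodup_append.2 ⟨hsnd, htnd, fun a ha b hb =>
      hAB.ne_of_mem ((hsA a).1 ha) ((htB b).1 hb)⟩
  · simp only [DTerm.leaves, List.mem_append, hsA, htB, Set.mem_union]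
  · simp only [DTerm.rel, hsR, htS]

theorem join (hR : IsCograph A R) (hS : IsCograph B S) (hAB : Disjoint A B) :
    IsCograph (A ∪ B) fun a b => R a b ∨ S a b ∨ (a ∈ A ∧ b ∈ B) ∨ (a ∈ B ∧ b ∈ A) := by
  obtain ⟨s, hs, hsnd, hsA, hsR⟩ := hR
  obtain ⟨t, ht, htnd, htB, htS⟩ := hS
  refine ⟨.tens s t, ⟨hs, ht⟩, ?_, fun v => ?_, fun a b => ?_⟩
  · exact List.nodup_append.2 ⟨hsnd, htnd, fun a ha b hb =>
      hAB.ne_of_mem ((hsA a).1 ha) ((htB b).1 hb)⟩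
  · simp only [DTerm.leaves, List.mem_append, hsA, htB, Set.mem_union]
  · simp only [DTerm.rel, hsR, htS, hsA, htB]

end IsCograph

namespace Separates

variable {R : V → V → Prop} {E A : Set V}

theorem ncard_lt (hE : E.Finite) (h : Separates R E A) :
    A.ncard < E.ncard ∧ (E \ A).ncard < E.ncard := by
  obtain ⟨x, hxE, hxA⟩ := h.diff_nonempty
  obtain ⟨y, hyA⟩ := h.nonempty
  exact ⟨Set.ncard_lt_ncard ((Set.ssubset_iff_of_subset h.subset).2 ⟨x, hxE, hxA⟩) hE,
    Set.ncard_lt_ncard ((Set.ssubset_iff_of_subset Set.sdiff_subset).2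
      ⟨y, h.subset hyA, fun hy => hy.2 hyA⟩) hE⟩

theorem inducedRel_iff (hsym : ∀ a b, R a b → R b a) (h : Separates R E A) {a b : V} :
    inducedRel R E a b ↔ inducedRel R A a b ∨ inducedRel R (E \ A) a b := by
  constructor
  · rintro ⟨ha, hb, hab⟩
    by_cases haA : a ∈ A <;> by_cases hbA : b ∈ A
    · exact .inl ⟨haA, hbA, hab⟩
    · exact absurd hab (h.not_adj a haA b ⟨hb, hbA⟩)
    · exact absurd (hsym a b hab) (h.not_adj b hbA a ⟨ha, haA⟩)
    · exact .inr ⟨⟨ha, haA⟩, ⟨hb, hbA⟩, hab⟩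
  · rintro (⟨ha, hb, hab⟩ | ⟨ha, hb, hab⟩)
    exacts [⟨h.subset ha, h.subset hb, hab⟩, ⟨ha.1, hb.1, hab⟩]

theorem inducedRel_iff_of_compl (hsym : ∀ a b, R a b → R b a) (h : Separates Rᶜ E A) {a b : V} :
    inducedRel R E a b ↔ inducedRel R A a b ∨ inducedRel R (E \ A) a b ∨
      (a ∈ A ∧ b ∈ E \ A) ∨ (a ∈ E \ A ∧ b ∈ A) := by
  constructor
  · rintro ⟨ha, hb, hab⟩
    by_cases haA : a ∈ A <;> by_cases hbA : b ∈ A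
    · exact .inl ⟨haA, hbA, hab⟩
    · exact .inr (.inr (.inl ⟨haA, hb, hbA⟩))
    · exact .inr (.inr (.inr ⟨⟨ha, haA⟩, hbA⟩))
    · exact .inr (.inl ⟨⟨ha, haA⟩, ⟨hb, hbA⟩, hab⟩)
  · rintro (⟨ha, hb, hab⟩ | ⟨ha, hb, hab⟩ | ⟨ha, hb⟩ | ⟨ha, hb⟩)
    · exact ⟨h.subset ha, h.subset hb, hab⟩
    · exact ⟨ha.1, hb.1, hab⟩
    · exact ⟨h.subset ha, hb.1, not_not.1 (h.not_adj a ha b hb)⟩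
    · exact ⟨ha.1, h.subset hb, hsym b a (not_not.1 (h.not_adj b hb a ha))⟩

end Separates

theorem P4Free.isCograph_inducedRel {R : V → V → Prop} (hirr : ∀ a, ¬ R a a)
    (hsym : ∀ a b, R a b → R b a) (hP : P4Free R) {E : Set V} (hE : E.Finite)
    (hne : E.Nonempty) : IsCograph E (inducedRel R E) := by
  induction hn : E.ncard using Nat.strong_induction_on generalizing E with
  | _ n ih =>
  rcases E.subsingleton_or_nontrivial with hsub | hnt
  · obtain ⟨u, hu⟩ := hne
    obtain rfl := hsub.eq_singleton_of_mem hu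
    refine (IsCograph.singleton u).congr fun a b => ⟨False.elim, ?_⟩
    rintro ⟨rfl, rfl, haa⟩
    exact hirr _ haa
  have ih' : ∀ B ⊆ E, B.Nonempty → B.ncard < n → IsCograph B (inducedRel R B) :=
    fun B hB hBne hlt => ih _ hlt (hE.subset hB) hBne rfl
  rcases hP.exists_separates hsym hE hnt with ⟨A, hA⟩ | ⟨A, hA⟩
  · have hAE := (ih' A hA.subset hA.nonempty (hn ▸ (hA.ncard_lt hE).1)).union
      (ih' (E \ A) Set.sdiff_subset hA.diff_nonempty (hn ▸ (hA.ncard_lt hE).2))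
      Set.disjoint_sdiff_right
    rw [Set.union_sdiff_cancel hA.subset] at hAE
    exact hAE.congr fun a b => (hA.inducedRel_iff hsym).symm
  · have hAE := (ih' A hA.subset hA.nonempty (hn ▸ (hA.ncard_lt hE).1)).join
      (ih' (E \ A) Set.sdiff_subset hA.diff_nonempty (hn ▸ (hA.ncard_lt hE).2))
      Set.disjoint_sdiff_right
    rw [Set.union_sdiff_cancel hA.subset] at hAE
    exact hAE.congr fun a b => (hA.inducedRel_iff_of_compl hsym).symm

/-- the finite cographs are exactly the finite P4-free graphs. -/
theorem cograph_iff_P4Free {V : Type} (E : Set V) (R : V → V → Prop)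
    (hfin : E.Finite) (hne : E.Nonempty)
    (hirr : ∀ a, ¬ R a a) (hsym : ∀ a b, R a b → R b a)
    (hsupp : ∀ a b, R a b → a ∈ E ∧ b ∈ E) :
    IsCograph E R ↔ P4Free R := by
  have hR : inducedRel R E = R := funext₂ fun a b =>
    propext ⟨fun h => h.2.2, fun h => ⟨(hsupp a b h).1, (hsupp a b h).2, h⟩⟩
  refine ⟨IsCograph.p4Free, fun hP => ?_⟩
  rw [← hR]
  exact hP.isCograph_inducedRel hirr hsym hfin hne
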